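/- The operadic insertions on the Lie algebras t̃ commute for parallel composition: let A, B, C be finite types and a, a′ ∈ A with a ≠ a′. Then, under the canonical identification of the index sets ((A−{a}) ⊔ B − {a′}) ⊔ C and ((A−{a′}) ⊔ C − {a}) ⊔ B, one has ∘_{a′}(∘_a(u, v), w) = ∘_a(∘_{a′}(u, w), v) for all u ∈ t̃_A, v ∈ t̃_B, w ∈ t̃_C, where each ∘ denotes the insertion homomorphism at the indicated element. -/

import Mathlib

/-! The extended Drinfeld–Kohno Lie algebras `t̃_A` over ℚ and their operadic
insertion homomorphisms. -/

/-- Generators `t_{ab}` (for `a ≠ b`) and `s_a` of the extended Drinfeld–Kohno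
Lie algebra `t̃_A`. -/
inductive ExtGen (A : Type) : Type
  | t : (a b : A) → a ≠ b → ExtGen A
  | s : A → ExtGen A

open FreeLieAlgebra in
/-- The defining relations of `t̃_A`: the infinitesimal braid relations on the `t`'s
together with the centrality of the `s_a`. -/
def extRels (A : Type) : Set (FreeLieAlgebra ℚ (ExtGen A)) :=
  {x | ∃ (a b : A) (h : a ≠ b),
      x = of ℚ (ExtGen.t a b h) - of ℚ (ExtGen.t b a h.symm)} ∪
  {x | ∃ (a b c d : A) (h₁ : a ≠ b) (h₂ : c ≠ d),
      a ≠ c ∧ a ≠ d ∧ b ≠ c ∧ b ≠ d ∧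
      x = ⁅of ℚ (ExtGen.t a b h₁), of ℚ (ExtGen.t c d h₂)⁆} ∪
  {x | ∃ (a b c : A) (hab : a ≠ b) (hbc : b ≠ c) (hac : a ≠ c),
      x = ⁅of ℚ (ExtGen.t a c hac), of ℚ (ExtGen.t a b hab) + of ℚ (ExtGen.t b c hbc)⁆} ∪
  {x | ∃ (a : A) (g : ExtGen A), x = ⁅of ℚ (ExtGen.s a), of ℚ g⁆}

/-- The Lie ideal generated by the relations of `t̃_A`. -/
noncomputable def extIdeal (A : Type) : LieIdeal ℚ (FreeLieAlgebra ℚ (ExtGen A)) :=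
  LieSubmodule.lieSpan ℚ _ (extRels A)

/-- The extended Drinfeld–Kohno Lie algebra `t̃_A`. -/
abbrev DKtTilde (A : Type) := FreeLieAlgebra ℚ (ExtGen A) ⧸ extIdeal A

/-- The class of the generator `t_{ab}` in `t̃_A`. -/
noncomputable def ttcl {A : Type} (a b : A) (h : a ≠ b) : DKtTilde A :=
  LieSubmodule.Quotient.mk (N := extIdeal A) (FreeLieAlgebra.of ℚ (ExtGen.t a b h))

/-- The class of the generator `s_a` in `t̃_A`. -/
noncomputable def scl {A : Type} (a : A) : DKtTilde A :=
  LieSubmodule.Quotient.mk (N := extIdeal A) (FreeLieAlgebra.of ℚ (ExtGen.s a))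

theorem ttcl_symm {A : Type} (a b : A) (h : a ≠ b) : ttcl a b h = ttcl b a h.symm := by
  refine (Submodule.Quotient.eq _).mpr ?_
  exact LieSubmodule.subset_lieSpan (Or.inl (Or.inl (Or.inl ⟨a, b, h, rfl⟩)))

section ProdLie

variable {L M : Type} [LieRing L] [LieRing M]

/-- Componentwise bracket on a product. -/
instance Prod.instLieRingBracket : Bracket (L × M) (L × M) :=
  ⟨fun x y => (⁅x.1, y.1⁆, ⁅x.2, y.2⁆)⟩

@[simp] theorem Prod.bracket_def (x y : L × M) :
    ⁅x, y⁆ = (⁅x.1, y.1⁆, ⁅x.2, y.2⁆) := rfl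

/-- The product of two Lie rings, with componentwise bracket. -/
instance Prod.instLieRing : LieRing (L × M) where
  add_lie x y z := by ext <;> simp
  lie_add x y z := by ext <;> simp
  lie_self x := by ext <;> simp
  leibniz_lie x y z := by ext <;> simp

/-- The product of two Lie algebras. -/
instance Prod.instLieAlgebra (R : Type*) [CommRing R] [LieAlgebra R L] [LieAlgebra R M] :
    LieAlgebra R (L × M) where
  lie_smul t x y := by ext <;> simp

end ProdLie

/-- The image in `t̃_C` of an unordered pair of elements of `B` under an injection
`e : B → C`: the unordered pair `{x, y}` (with `x ≠ y`) is sent to the class of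
`t_{e x, e y}`, and diagonal pairs are sent to `0`.  Well defined thanks to the
relation `t_{ab} = t_{ba}`. -/
noncomputable def ttclPairMap {B C : Type} [DecidableEq B] (e : B → C)
    (he : Function.Injective e) : Sym2 B → DKtTilde C :=
  Sym2.lift ⟨fun x y => if h : x ≠ y then ttcl (e x) (e y) (fun hh => h (he hh)) else 0, by
    intro x y
    by_cases h : x = y
    · subst h; rfl
    · simp only [dif_pos h, dif_pos (Ne.symm h)]
      exact ttcl_symm _ _ _⟩

/-- `Σ_{{x,y} ⊆ B, x ≠ y} t_{e x, e y}` in `t̃_C`, the sum running over unordered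
pairs of distinct elements of `B`. -/
noncomputable def pairSum {B C : Type} [Fintype B] [DecidableEq B] (e : B → C)
    (he : Function.Injective e) : DKtTilde C :=
  ∑ p ∈ Finset.univ.filter (fun p : Sym2 B => ¬ p.IsDiag), ttclPairMap e he p

/-- The operadic insertion `∘_a : t̃_A × t̃_B → t̃_{(A−{a}) ⊔ B}` is the (unique) Lie
algebra homomorphism from the product Lie algebra satisfying these equations on the
classes of the generators. -/
def IsInsertion (A B : Type) [Fintype B] [DecidableEq B] (a : A)
    (f : DKtTilde A × DKtTilde B →ₗ⁅ℚ⁆ DKtTilde ({x : A // x ≠ a} ⊕ B)) : Prop :=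
  (∀ (x y : A) (hx : x ≠ a) (hy : y ≠ a) (hxy : x ≠ y),
      f (ttcl x y hxy, 0) =
        ttcl (Sum.inl ⟨x, hx⟩) (Sum.inl ⟨y, hy⟩)
          (fun h => hxy (congrArg Subtype.val (Sum.inl_injective h)))) ∧
  (∀ (x : A) (hx : x ≠ a), f (scl x, 0) = scl (Sum.inl ⟨x, hx⟩)) ∧
  (∀ (x y : B) (hxy : x ≠ y),
      f (0, ttcl x y hxy) =
        ttcl (Sum.inr x) (Sum.inr y) (fun h => hxy (Sum.inr_injective h))) ∧
  (∀ x : B, f (0, scl x) = scl (Sum.inr x)) ∧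
  (∀ (x : A) (hx : x ≠ a) (hax : a ≠ x),
      f (ttcl a x hax, 0) =
        ∑ y : B, ttcl (Sum.inl ⟨x, hx⟩) (Sum.inr y) (fun h => Sum.inl_ne_inr h)) ∧
  (f (scl a, 0) = (∑ x : B, scl (Sum.inr x)) +
      pairSum (Sum.inr : B → {x : A // x ≠ a} ⊕ B) Sum.inr_injective)

/-- A relabelling homomorphism `t̃_X → t̃_Y` induced by a bijection `e : X ≃ Y` of the
index sets: it sends the class of `t_{xy}` to the class of `t_{e x, e y}` and the class
of `s_x` to the class of `s_{e x}`. -/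
def IsRelabel {X Y : Type} (e : X ≃ Y) (r : DKtTilde X →ₗ⁅ℚ⁆ DKtTilde Y) : Prop :=
  (∀ (x y : X) (h : x ≠ y),
      r (ttcl x y h) = ttcl (e x) (e y) (fun hh => h (e.injective hh))) ∧
  (∀ x : X, r (scl x) = scl (e x))

/-- The canonical identification of index sets
`((A−{a}) ⊔ B − {a′}) ⊔ C ≃ ((A−{a′}) ⊔ C − {a}) ⊔ B`. -/
def commEquiv (A B C : Type) (a a' : A) (h : a ≠ a') :
    ({x : {x : A // x ≠ a} ⊕ B // x ≠ Sum.inl ⟨a', Ne.symm h⟩} ⊕ C) ≃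
      ({x : {x : A // x ≠ a'} ⊕ C // x ≠ Sum.inl ⟨a, h⟩} ⊕ B) where
  toFun z := match z with
    | .inl ⟨.inl ⟨x, hxa⟩, hx⟩ =>
        .inl ⟨.inl ⟨x, fun hxa' => hx (by cases hxa'; rfl)⟩,
          fun hh => hxa (congrArg Subtype.val (Sum.inl_injective hh))⟩
    | .inl ⟨.inr y, _⟩ => .inr y
    | .inr c => .inl ⟨.inr c, fun hh => Sum.inr_ne_inl hh⟩
  invFun z := match z with
    | .inl ⟨.inl ⟨x, hxa'⟩, hx⟩ =>
        .inl ⟨.inl ⟨x, fun hxa => hx (by cases hxa; rfl)⟩,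
          fun hh => hxa' (congrArg Subtype.val (Sum.inl_injective hh))⟩
    | .inl ⟨.inr c, _⟩ => .inr c
    | .inr y => .inl ⟨.inr y, fun hh => Sum.inr_ne_inl hh⟩
  left_inv := by rintro (⟨(⟨x, hx⟩ | y), hq⟩ | c) <;> rfl
  right_inv := by rintro (⟨(⟨x, hx⟩ | c), hq⟩ | y) <;> rfl

/-! Both sides are additive in `(u, v, w)`, and each of `u ↦ (u, 0, 0)`, `v ↦ (0, v, 0)`,
`w ↦ (0, 0, w)` turns them into Lie algebra homomorphisms, so it suffices to compare them on
the generators `t_{xy}`, `s_x` of `t̃_A`, `t̃_B` and `t̃_C`. Only the generators of `t̃_A`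
involving `a` or `a′` need a computation: for instance `t_{aa′}` is sent to `Σ_{b,c} t_{bc}` by
either order of insertion, and `s_a` to `Σ_b s_b + Σ_{{b,b′}} t_{bb′}`, because inserting at `a′`
fixes the `t_{bb′}` and `s_b` with `b, b′ ∈ B`. -/

noncomputable def DKtTilde.mk (A : Type) : FreeLieAlgebra ℚ (ExtGen A) →ₗ⁅ℚ⁆ DKtTilde A :=
  { (extIdeal A).toSubmodule.mkQ with map_lie' := rfl }

theorem DKtTilde.hom_ext {A L : Type} [LieRing L] [LieAlgebra ℚ L] {F G : DKtTilde A →ₗ⁅ℚ⁆ L}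
    (ht : ∀ (x y : A) (h : x ≠ y), F (ttcl x y h) = G (ttcl x y h))
    (hs : ∀ x : A, F (scl x) = G (scl x)) : F = G := by
  have h : F.comp (DKtTilde.mk A) = G.comp (DKtTilde.mk A) := by
    refine FreeLieAlgebra.hom_ext fun g ↦ ?_
    cases g with
    | t x y h => exact ht x y h
    | s x => exact hs x
  ext z
  obtain ⟨z, rfl⟩ := LieSubmodule.Quotient.surjective_mk' (N := extIdeal A) z
  exact LieHom.congr_fun h z

section LieHomProd

variable {R L M N : Type*} [CommRing R] [LieRing L] [LieAlgebra R L] [LieRing M]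
  [LieAlgebra R M] [LieRing N] [LieAlgebra R N] (F : L × M →ₗ⁅R⁆ N)

theorem LieHom.map_mk_eq_add (x : L) (y : M) : F (x, y) = F (x, 0) + F (0, y) := by
  rw [← map_add, Prod.mk_add_mk, add_zero, zero_add]

theorem LieHom.map_add_mk_zero (x y : L) : F (x + y, 0) = F (x, 0) + F (y, 0) := by
  rw [← map_add, Prod.mk_add_mk, add_zero]

theorem LieHom.map_sum_mk_zero {ι : Type*} (s : Finset ι) (x : ι → L) :
    F (∑ i ∈ s, x i, 0) = ∑ i ∈ s, F (x i, 0) :=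
  map_sum (F.comp (LieHom.inl R L M)) x s

end LieHomProd

theorem map_pairSum {B C D F : Type} [Fintype B] [DecidableEq B]
    [FunLike F (DKtTilde C) (DKtTilde D)] [AddMonoidHomClass F (DKtTilde C) (DKtTilde D)]
    {e : B → C} (he : Function.Injective e) {e' : B → D} (he' : Function.Injective e') (φ : F)
    (h : ∀ (x y : B) (hxy : x ≠ y),
      φ (ttcl (e x) (e y) (he.ne hxy)) = ttcl (e' x) (e' y) (he'.ne hxy)) :
    φ (pairSum e he) = pairSum e' he' := by
  rw [pairSum, map_sum]
  refine Finset.sum_congr rfl fun z hz ↦ ?_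
  induction z using Sym2.ind with
  | _ x y =>
    have hxy : x ≠ y := by simpa using hz
    simp only [ttclPairMap, Sym2.lift_mk, dif_pos hxy]
    exact h x y hxy

namespace IsInsertion

variable {A B : Type} [Fintype B] [DecidableEq B] {a : A}
  {f : DKtTilde A × DKtTilde B →ₗ⁅ℚ⁆ DKtTilde ({x : A // x ≠ a} ⊕ B)}

theorem map_ttcl_fst (hf : IsInsertion A B a f) {x y : A} (hx : x ≠ a) (hy : y ≠ a)
    (hxy : x ≠ y) :
    f (ttcl x y hxy, 0) = ttcl (.inl ⟨x, hx⟩) (.inl ⟨y, hy⟩) (by simpa using hxy) :=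
  hf.1 x y hx hy hxy

theorem map_scl_fst (hf : IsInsertion A B a f) {x : A} (hx : x ≠ a) :
    f (scl x, 0) = scl (.inl ⟨x, hx⟩) :=
  hf.2.1 x hx

theorem map_ttcl_snd (hf : IsInsertion A B a f) {x y : B} (hxy : x ≠ y) :
    f (0, ttcl x y hxy) = ttcl (.inr x) (.inr y) (by simpa using hxy) :=
  hf.2.2.1 x y hxy

theorem map_scl_snd (hf : IsInsertion A B a f) (x : B) : f (0, scl x) = scl (.inr x) :=
  hf.2.2.2.1 x

theorem map_ttcl_self (hf : IsInsertion A B a f) {x : A} (hx : x ≠ a) (hax : a ≠ x) :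
    f (ttcl a x hax, 0) = ∑ y : B, ttcl (.inl ⟨x, hx⟩) (.inr y) Sum.inl_ne_inr :=
  hf.2.2.2.2.1 x hx hax

theorem map_scl_self (hf : IsInsertion A B a f) :
    f (scl a, 0) = ∑ x : B, scl (.inr x) + pairSum Sum.inr Sum.inr_injective :=
  hf.2.2.2.2.2

end IsInsertion

namespace IsRelabel

variable {X Y : Type} {e : X ≃ Y} {r : DKtTilde X →ₗ⁅ℚ⁆ DKtTilde Y}

theorem map_ttcl (hr : IsRelabel e r) {x y : X} (h : x ≠ y) :
    r (ttcl x y h) = ttcl (e x) (e y) (e.injective.ne h) :=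
  hr.1 x y h

theorem map_scl (hr : IsRelabel e r) (x : X) : r (scl x) = scl (e x) :=
  hr.2 x

end IsRelabel

section ParallelInsertions

variable {A B C : Type} {a a' : A} {haa' : a ≠ a'}

@[simp] theorem commEquiv_inl_inl (x : A) (hxa : x ≠ a) (hx) :
    commEquiv A B C a a' haa' (.inl ⟨.inl ⟨x, hxa⟩, hx⟩) =
      .inl ⟨.inl ⟨x, fun h ↦ hx (by cases h; rfl)⟩, by simpa using hxa⟩ := rfl

@[simp] theorem commEquiv_inl_inr (b : B) (hb) :
    commEquiv A B C a a' haa' (.inl ⟨.inr b, hb⟩) = .inr b := rfl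

@[simp] theorem commEquiv_inr (c : C) :
    commEquiv A B C a a' haa' (.inr c) = .inl ⟨.inr c, by simp⟩ := rfl

variable [Fintype B] [Fintype C] [DecidableEq B] [DecidableEq C]
  {f : DKtTilde A × DKtTilde B →ₗ⁅ℚ⁆ DKtTilde ({x : A // x ≠ a} ⊕ B)}
  {g : DKtTilde ({x : A // x ≠ a} ⊕ B) × DKtTilde C →ₗ⁅ℚ⁆
      DKtTilde ({x : {x : A // x ≠ a} ⊕ B // x ≠ Sum.inl ⟨a', Ne.symm haa'⟩} ⊕ C)}
  {p : DKtTilde A × DKtTilde C →ₗ⁅ℚ⁆ DKtTilde ({x : A // x ≠ a'} ⊕ C)}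
  {q : DKtTilde ({x : A // x ≠ a'} ⊕ C) × DKtTilde B →ₗ⁅ℚ⁆
      DKtTilde ({x : {x : A // x ≠ a'} ⊕ C // x ≠ Sum.inl ⟨a, haa'⟩} ⊕ B)}
  {r : DKtTilde ({x : {x : A // x ≠ a} ⊕ B // x ≠ Sum.inl ⟨a', Ne.symm haa'⟩} ⊕ C) →ₗ⁅ℚ⁆
      DKtTilde ({x : {x : A // x ≠ a'} ⊕ C // x ≠ Sum.inl ⟨a, haa'⟩} ⊕ B)}

theorem insertion_comm_ttcl (hf : IsInsertion A B a f)
    (hg : IsInsertion ({x : A // x ≠ a} ⊕ B) C (Sum.inl ⟨a', Ne.symm haa'⟩) g)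
    (hp : IsInsertion A C a' p)
    (hq : IsInsertion ({x : A // x ≠ a'} ⊕ C) B (Sum.inl ⟨a, haa'⟩) q)
    (hr : IsRelabel (commEquiv A B C a a' haa') r)
    {x y : A} (hxa : x ≠ a) (hya : y ≠ a) (hxa' : x ≠ a') (hya' : y ≠ a') (hxy : x ≠ y) :
    r (g (f (ttcl x y hxy, 0), 0)) = q (p (ttcl x y hxy, 0), 0) := by
  simp [hf.map_ttcl_fst hxa hya, hg.map_ttcl_fst, hr.map_ttcl, hp.map_ttcl_fst hxa' hya',
    hq.map_ttcl_fst, hxa, hya, hxa', hya']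

theorem insertion_comm_ttcl_left (hf : IsInsertion A B a f)
    (hg : IsInsertion ({x : A // x ≠ a} ⊕ B) C (Sum.inl ⟨a', Ne.symm haa'⟩) g)
    (hp : IsInsertion A C a' p)
    (hq : IsInsertion ({x : A // x ≠ a'} ⊕ C) B (Sum.inl ⟨a, haa'⟩) q)
    (hr : IsRelabel (commEquiv A B C a a' haa') r)
    {y : A} (hya' : y ≠ a') (hay : a ≠ y) :
    r (g (f (ttcl a y hay, 0), 0)) = q (p (ttcl a y hay, 0), 0) := by
  simp [hf.map_ttcl_self hay.symm, LieHom.map_sum_mk_zero, hg.map_ttcl_fst, hr.map_ttcl,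
    hp.map_ttcl_fst haa' hya', hq.map_ttcl_self, hay.symm, hya']

theorem insertion_comm_ttcl_right (hf : IsInsertion A B a f)
    (hg : IsInsertion ({x : A // x ≠ a} ⊕ B) C (Sum.inl ⟨a', Ne.symm haa'⟩) g)
    (hp : IsInsertion A C a' p)
    (hq : IsInsertion ({x : A // x ≠ a'} ⊕ C) B (Sum.inl ⟨a, haa'⟩) q)
    (hr : IsRelabel (commEquiv A B C a a' haa') r)
    {y : A} (hya : y ≠ a) (hay : a' ≠ y) :
    r (g (f (ttcl a' y hay, 0), 0)) = q (p (ttcl a' y hay, 0), 0) := by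
  simp [hf.map_ttcl_fst haa'.symm hya, LieHom.map_sum_mk_zero, hg.map_ttcl_self, hr.map_ttcl,
    hp.map_ttcl_self hay.symm, hq.map_ttcl_fst, hya, hay.symm]

theorem insertion_comm_ttcl_self (hf : IsInsertion A B a f)
    (hg : IsInsertion ({x : A // x ≠ a} ⊕ B) C (Sum.inl ⟨a', Ne.symm haa'⟩) g)
    (hp : IsInsertion A C a' p)
    (hq : IsInsertion ({x : A // x ≠ a'} ⊕ C) B (Sum.inl ⟨a, haa'⟩) q)
    (hr : IsRelabel (commEquiv A B C a a' haa') r) :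
    r (g (f (ttcl a a' haa', 0), 0)) = q (p (ttcl a a' haa', 0), 0) := by
  conv_rhs => rw [ttcl_symm a a']
  simp [hf.map_ttcl_self haa'.symm, LieHom.map_sum_mk_zero, hg.map_ttcl_self, hr.map_ttcl,
    hp.map_ttcl_self haa', hq.map_ttcl_self]
  rw [Finset.sum_comm]
  exact Finset.sum_congr rfl fun _ _ ↦ Finset.sum_congr rfl fun _ _ ↦ ttcl_symm _ _ _

theorem insertion_comm_fst_ttcl (hf : IsInsertion A B a f)
    (hg : IsInsertion ({x : A // x ≠ a} ⊕ B) C (Sum.inl ⟨a', Ne.symm haa'⟩) g)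
    (hp : IsInsertion A C a' p)
    (hq : IsInsertion ({x : A // x ≠ a'} ⊕ C) B (Sum.inl ⟨a, haa'⟩) q)
    (hr : IsRelabel (commEquiv A B C a a' haa') r) (x y : A) (hxy : x ≠ y) :
    r (g (f (ttcl x y hxy, 0), 0)) = q (p (ttcl x y hxy, 0), 0) := by
  rcases eq_or_ne x a with rfl | hxa
  · rcases eq_or_ne y a' with rfl | hya'
    · exact insertion_comm_ttcl_self hf hg hp hq hr
    · exact insertion_comm_ttcl_left hf hg hp hq hr hya' hxy
  rcases eq_or_ne y a with rfl | hya
  · rcases eq_or_ne x a' with rfl | hxa'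
    · rw [ttcl_symm]; exact insertion_comm_ttcl_self hf hg hp hq hr
    · rw [ttcl_symm]; exact insertion_comm_ttcl_left hf hg hp hq hr hxa' _
  rcases eq_or_ne x a' with rfl | hxa'
  · exact insertion_comm_ttcl_right hf hg hp hq hr hya hxy
  rcases eq_or_ne y a' with rfl | hya'
  · rw [ttcl_symm]; exact insertion_comm_ttcl_right hf hg hp hq hr hxa _
  exact insertion_comm_ttcl hf hg hp hq hr hxa hya hxa' hya' hxy

theorem insertion_comm_scl (hf : IsInsertion A B a f)
    (hg : IsInsertion ({x : A // x ≠ a} ⊕ B) C (Sum.inl ⟨a', Ne.symm haa'⟩) g)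
    (hp : IsInsertion A C a' p)
    (hq : IsInsertion ({x : A // x ≠ a'} ⊕ C) B (Sum.inl ⟨a, haa'⟩) q)
    (hr : IsRelabel (commEquiv A B C a a' haa') r) {x : A} (hxa : x ≠ a) (hxa' : x ≠ a') :
    r (g (f (scl x, 0), 0)) = q (p (scl x, 0), 0) := by
  simp [hf.map_scl_fst hxa, hg.map_scl_fst, hr.map_scl, hp.map_scl_fst hxa', hq.map_scl_fst,
    hxa, hxa']

theorem insertion_comm_scl_left (hf : IsInsertion A B a f)
    (hg : IsInsertion ({x : A // x ≠ a} ⊕ B) C (Sum.inl ⟨a', Ne.symm haa'⟩) g)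
    (hp : IsInsertion A C a' p)
    (hq : IsInsertion ({x : A // x ≠ a'} ⊕ C) B (Sum.inl ⟨a, haa'⟩) q)
    (hr : IsRelabel (commEquiv A B C a a' haa') r) :
    r (g (f (scl a, 0), 0)) = q (p (scl a, 0), 0) := by
  have hpairs : r (g (pairSum Sum.inr Sum.inr_injective, 0)) =
      pairSum Sum.inr Sum.inr_injective :=
    map_pairSum _ _ (r.comp (g.comp (LieHom.inl ℚ _ _)))
      fun x y hxy ↦ by simp [hg.map_ttcl_fst, hr.map_ttcl]
  simp [hf.map_scl_self, LieHom.map_add_mk_zero, LieHom.map_sum_mk_zero, hg.map_scl_fst,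
    hr.map_scl, hpairs, hp.map_scl_fst haa', hq.map_scl_self]

theorem insertion_comm_scl_right (hf : IsInsertion A B a f)
    (hg : IsInsertion ({x : A // x ≠ a} ⊕ B) C (Sum.inl ⟨a', Ne.symm haa'⟩) g)
    (hp : IsInsertion A C a' p)
    (hq : IsInsertion ({x : A // x ≠ a'} ⊕ C) B (Sum.inl ⟨a, haa'⟩) q)
    (hr : IsRelabel (commEquiv A B C a a' haa') r) :
    r (g (f (scl a', 0), 0)) = q (p (scl a', 0), 0) := by
  have hpairs : r (pairSum Sum.inr Sum.inr_injective) =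
      q (pairSum Sum.inr Sum.inr_injective, 0) := by
    let ι : C → {x : {x : A // x ≠ a'} ⊕ C // x ≠ Sum.inl ⟨a, haa'⟩} ⊕ B :=
      fun c ↦ .inl ⟨.inr c, by simp⟩
    have hι : Function.Injective ι := fun x y ↦ by simp [ι]
    exact (map_pairSum Sum.inr_injective hι r (by simp [ι, hr.map_ttcl])).trans
      (map_pairSum Sum.inr_injective hι (q.comp (LieHom.inl ℚ _ _))
        (by simp [ι, hq.map_ttcl_fst])).symm
  simp [hf.map_scl_fst haa'.symm, hg.map_scl_self, LieHom.map_add_mk_zero,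
    LieHom.map_sum_mk_zero, hq.map_scl_fst, hr.map_scl, hpairs, hp.map_scl_self]

theorem insertion_comm_fst (hf : IsInsertion A B a f)
    (hg : IsInsertion ({x : A // x ≠ a} ⊕ B) C (Sum.inl ⟨a', Ne.symm haa'⟩) g)
    (hp : IsInsertion A C a' p)
    (hq : IsInsertion ({x : A // x ≠ a'} ⊕ C) B (Sum.inl ⟨a, haa'⟩) q)
    (hr : IsRelabel (commEquiv A B C a a' haa') r) (u : DKtTilde A) :
    r (g (f (u, 0), 0)) = q (p (u, 0), 0) := by
  have h : (r.comp (g.comp (LieHom.inl ℚ _ _))).comp (f.comp (LieHom.inl ℚ _ _)) =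
      (q.comp (LieHom.inl ℚ _ _)).comp (p.comp (LieHom.inl ℚ _ _)) := by
    refine DKtTilde.hom_ext (insertion_comm_fst_ttcl hf hg hp hq hr) fun x ↦ ?_
    rcases eq_or_ne x a with rfl | hxa
    · exact insertion_comm_scl_left hf hg hp hq hr
    rcases eq_or_ne x a' with rfl | hxa'
    · exact insertion_comm_scl_right hf hg hp hq hr
    exact insertion_comm_scl hf hg hp hq hr hxa hxa'
  exact LieHom.congr_fun h u

theorem insertion_comm_snd (hf : IsInsertion A B a f)
    (hg : IsInsertion ({x : A // x ≠ a} ⊕ B) C (Sum.inl ⟨a', Ne.symm haa'⟩) g)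
    (hq : IsInsertion ({x : A // x ≠ a'} ⊕ C) B (Sum.inl ⟨a, haa'⟩) q)
    (hr : IsRelabel (commEquiv A B C a a' haa') r) (v : DKtTilde B) :
    r (g (f (0, v), 0)) = q (0, v) := by
  have h : (r.comp (g.comp (LieHom.inl ℚ _ _))).comp (f.comp (LieHom.inr ℚ _ _)) =
      q.comp (LieHom.inr ℚ _ _) :=
    DKtTilde.hom_ext
      (fun x y hxy ↦ by simp [hf.map_ttcl_snd, hg.map_ttcl_fst, hr.map_ttcl, hq.map_ttcl_snd])
      fun x ↦ by simp [hf.map_scl_snd, hg.map_scl_fst, hr.map_scl, hq.map_scl_snd]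
  exact LieHom.congr_fun h v

theorem insertion_comm_third
    (hg : IsInsertion ({x : A // x ≠ a} ⊕ B) C (Sum.inl ⟨a', Ne.symm haa'⟩) g)
    (hp : IsInsertion A C a' p)
    (hq : IsInsertion ({x : A // x ≠ a'} ⊕ C) B (Sum.inl ⟨a, haa'⟩) q)
    (hr : IsRelabel (commEquiv A B C a a' haa') r) (w : DKtTilde C) :
    r (g (0, w)) = q (p (0, w), 0) := by
  have h : r.comp (g.comp (LieHom.inr ℚ _ _)) =
      (q.comp (LieHom.inl ℚ _ _)).comp (p.comp (LieHom.inr ℚ _ _)) :=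
    DKtTilde.hom_ext
      (fun x y hxy ↦ by simp [hg.map_ttcl_snd, hr.map_ttcl, hp.map_ttcl_snd, hq.map_ttcl_fst])
      fun x ↦ by simp [hg.map_scl_snd, hr.map_scl, hp.map_scl_snd, hq.map_scl_fst]
  exact LieHom.congr_fun h w

end ParallelInsertions

theorem insertion_comm_general (A B C : Type)
    [Fintype B] [Fintype C] [DecidableEq B] [DecidableEq C]
    (a a' : A) (haa' : a ≠ a')
    (f : DKtTilde A × DKtTilde B →ₗ⁅ℚ⁆ DKtTilde ({x : A // x ≠ a} ⊕ B))
    (hf : IsInsertion A B a f)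
    (g : DKtTilde ({x : A // x ≠ a} ⊕ B) × DKtTilde C →ₗ⁅ℚ⁆
      DKtTilde ({x : {x : A // x ≠ a} ⊕ B // x ≠ Sum.inl ⟨a', Ne.symm haa'⟩} ⊕ C))
    (hg : IsInsertion ({x : A // x ≠ a} ⊕ B) C (Sum.inl ⟨a', Ne.symm haa'⟩) g)
    (p : DKtTilde A × DKtTilde C →ₗ⁅ℚ⁆ DKtTilde ({x : A // x ≠ a'} ⊕ C))
    (hp : IsInsertion A C a' p)
    (q : DKtTilde ({x : A // x ≠ a'} ⊕ C) × DKtTilde B →ₗ⁅ℚ⁆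
      DKtTilde ({x : {x : A // x ≠ a'} ⊕ C // x ≠ Sum.inl ⟨a, haa'⟩} ⊕ B))
    (hq : IsInsertion ({x : A // x ≠ a'} ⊕ C) B (Sum.inl ⟨a, haa'⟩) q)
    (r : DKtTilde ({x : {x : A // x ≠ a} ⊕ B // x ≠ Sum.inl ⟨a', Ne.symm haa'⟩} ⊕ C) →ₗ⁅ℚ⁆
      DKtTilde ({x : {x : A // x ≠ a'} ⊕ C // x ≠ Sum.inl ⟨a, haa'⟩} ⊕ B))
    (hr : IsRelabel (commEquiv A B C a a' haa') r)
    (u : DKtTilde A) (v : DKtTilde B) (w : DKtTilde C) :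
    r (g (f (u, v), w)) = q (p (u, w), v) := by
  calc r (g (f (u, v), w))
      = r (g (f (u, 0), 0)) + r (g (f (0, v), 0)) + r (g (0, w)) := by
        rw [f.map_mk_eq_add u v, g.map_mk_eq_add _ w, g.map_add_mk_zero, map_add, map_add]
    _ = q (p (u, 0), 0) + q (0, v) + q (p (0, w), 0) := by
        rw [insertion_comm_fst hf hg hp hq hr, insertion_comm_snd hf hg hq hr,
          insertion_comm_third hg hp hq hr]
    _ = q (p (u, w), v) := by
        rw [q.map_mk_eq_add (p (u, w)) v, p.map_mk_eq_add u w, q.map_add_mk_zero]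
        abel

/-- commutativity of parallel operadic insertions on the Lie algebras `t̃`:
for `a ≠ a′` in `A`, `∘_{a′} (∘_a (u, v), w) = ∘_a (∘_{a′} (u, w), v)` under the
canonical identification `((A−{a}) ⊔ B − {a′}) ⊔ C ≃ ((A−{a′}) ⊔ C − {a}) ⊔ B`. -/
theorem insertion_comm (A B C : Type)
    [Fintype A] [Fintype B] [Fintype C] [DecidableEq A] [DecidableEq B] [DecidableEq C]
    (a a' : A) (haa' : a ≠ a')
    (f : DKtTilde A × DKtTilde B →ₗ⁅ℚ⁆ DKtTilde ({x : A // x ≠ a} ⊕ B))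
    (hf : IsInsertion A B a f)
    (g : DKtTilde ({x : A // x ≠ a} ⊕ B) × DKtTilde C →ₗ⁅ℚ⁆
      DKtTilde ({x : {x : A // x ≠ a} ⊕ B // x ≠ Sum.inl ⟨a', Ne.symm haa'⟩} ⊕ C))
    (hg : IsInsertion ({x : A // x ≠ a} ⊕ B) C (Sum.inl ⟨a', Ne.symm haa'⟩) g)
    (p : DKtTilde A × DKtTilde C →ₗ⁅ℚ⁆ DKtTilde ({x : A // x ≠ a'} ⊕ C))
    (hp : IsInsertion A C a' p)
    (q : DKtTilde ({x : A // x ≠ a'} ⊕ C) × DKtTilde B →ₗ⁅ℚ⁆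
      DKtTilde ({x : {x : A // x ≠ a'} ⊕ C // x ≠ Sum.inl ⟨a, haa'⟩} ⊕ B))
    (hq : IsInsertion ({x : A // x ≠ a'} ⊕ C) B (Sum.inl ⟨a, haa'⟩) q)
    (r : DKtTilde ({x : {x : A // x ≠ a} ⊕ B // x ≠ Sum.inl ⟨a', Ne.symm haa'⟩} ⊕ C) →ₗ⁅ℚ⁆
      DKtTilde ({x : {x : A // x ≠ a'} ⊕ C // x ≠ Sum.inl ⟨a, haa'⟩} ⊕ B))
    (hr : IsRelabel (commEquiv A B C a a' haa') r)
    (u : DKtTilde A) (v : DKtTilde B) (w : DKtTilde C) :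
    r (g (f (u, v), w)) = q (p (u, w), v) :=
  insertion_comm_general A B C a a' haa' f hf g hg p hp q hq r hr u v w
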